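/- arXiv:2311.05715 — 3 statements merged into one kernel-verified Lean document; each statement's English description precedes it below -/
import Mathlib

section
/- Let ψ ∈ C¹([a,b]) with ψ'(t) > 0 for all t ∈ [a,b], let p ∈ ℕ, α ∈ (0,1], and let f be a piecewise continuous function on [a,b]. Then for every t ∈ [a,b], the iterated ψ-Riemann–Liouville integral of order (p+1)α of f equals the generalized ψ-convolution of the kernel s ↦ (ψ(s) − ψ(a))^{pα+α−1}/Γ(pα+α) with f; that is, I_a^{(p+1)α,ψ} f(t) = ∫_a^t ((ψ(s) − ψ(a))^{pα+α−1}/Γ(pα+α)) · f(ψ^{−1}(ψ(t) + ψ(a) − ψ(s))) · ψ'(s) ds. -/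
/-
Substituting `u = ψ s` turns both sides into integrals over `[ψ a, ψ t]`: the fractional
integral becomes `∫ (ψ t - u)^(β-1) f (ψ⁻¹ u) du / Γ(β)` and the convolution becomes
`∫ (u - ψ a)^(β-1) f (ψ⁻¹ (ψ t + ψ a - u)) du / Γ(β)`; the reflection `u ↦ ψ t + ψ a - u`
of `[ψ a, ψ t]` exchanges the two.
-/

open MeasureTheory intervalIntegral Real

/-- The left ψ-Riemann–Liouville fractional integral of order `α` of `f`, with base point `a`. -/
noncomputable def psiInt (ψ : ℝ → ℝ) (α a : ℝ) (f : ℝ → ℝ) (t : ℝ) : ℝ :=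
  (1 / Real.Gamma α) * ∫ s in a..t, deriv ψ s * (ψ t - ψ s) ^ (α - 1) * f s

/-- `f` is piecewise continuous on `[a, b]`: continuous off a finite set of points. -/
def PiecewiseContinuousOn (f : ℝ → ℝ) (a b : ℝ) : Prop :=
  ∃ S : Finset ℝ, ContinuousOn f (Set.Icc a b \ S)

open Set

theorem intervalIntegral.integral_comp_add_sub {E : Type*} [NormedAddCommGroup E]
    [NormedSpace ℝ E] (g : ℝ → E) (c d : ℝ) :
    ∫ x in c..d, g (c + d - x) = ∫ x in c..d, g x := by
  rw [integral_comp_sub_left, add_sub_cancel_right, add_sub_cancel_left]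

theorem integral_comp_mul_deriv_of_contDiffOn {ψ : ℝ → ℝ} {a t : ℝ} (hat : a ≤ t)
    (hψ : ContDiffOn ℝ 1 ψ (Icc a t)) (hψ' : ∀ x ∈ Ioo a t, 0 ≤ deriv ψ x) (g : ℝ → ℝ) :
    ∫ x in a..t, g (ψ x) * deriv ψ x = ∫ u in ψ a..ψ t, g u := by
  have hIoo : Ioo (min a t) (max a t) = Ioo a t := by rw [min_eq_left hat, max_eq_right hat]
  refine integral_comp_mul_deriv_of_deriv_nonneg (by rw [uIcc_of_le hat]; exact hψ.continuousOn)
    (fun x hx => ?_) (fun x hx => hψ' x (hIoo ▸ hx))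
  rw [hIoo] at hx
  exact ((hψ.differentiableOn one_ne_zero x (Ioo_subset_Icc_self hx)).differentiableAt
    (Icc_mem_nhds hx.1 hx.2)).hasDerivAt

theorem psiInt_eq_psiConvolution_general (a b : ℝ) (ψ ψinv : ℝ → ℝ)
    (hψ : ContDiffOn ℝ 1 ψ (Set.Icc a b))
    (hψ' : ∀ t ∈ Set.Icc a b, 0 < deriv ψ t)
    (hinv : ∀ x ∈ Set.Icc a b, ψinv (ψ x) = x)
    (p : ℕ) (α : ℝ)
    (f : ℝ → ℝ) :
    ∀ t ∈ Set.Icc a b,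
      psiInt ψ ((p + 1 : ℝ) * α) a f t =
        ∫ s in a..t,
          (ψ s - ψ a) ^ ((p : ℝ) * α + α - 1) / Real.Gamma ((p : ℝ) * α + α) *
            f (ψinv (ψ t + ψ a - ψ s)) * deriv ψ s := by
  intro t ht
  set β := (p : ℝ) * α + α
  have hsub : Icc a t ⊆ Icc a b := Icc_subset_Icc_right ht.2
  have hsubst := integral_comp_mul_deriv_of_contDiffOn ht.1 (hψ.mono hsub)
    fun x hx => (hψ' x (hsub (Ioo_subset_Icc_self hx))).le
  calc psiInt ψ ((p + 1 : ℝ) * α) a f t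
      = 1 / Gamma β * ∫ s in a..t, (ψ t - ψ s) ^ (β - 1) * f (ψinv (ψ s)) * deriv ψ s := by
        rw [psiInt, add_one_mul]
        congr 1
        refine integral_congr fun s hs => ?_
        rw [uIcc_of_le ht.1] at hs
        rw [hinv s (hsub hs)]
        ring
    _ = 1 / Gamma β * ∫ u in ψ a..ψ t, (ψ t - u) ^ (β - 1) * f (ψinv u) := by
        rw [← hsubst]
    _ = ∫ u in ψ a..ψ t, (u - ψ a) ^ (β - 1) / Gamma β * f (ψinv (ψ t + ψ a - u)) := by
        rw [← intervalIntegral.integral_const_mul, ← integral_comp_add_sub]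
        refine integral_congr fun u _ => ?_
        rw [show ψ t - (ψ a + ψ t - u) = u - ψ a by ring, add_comm (ψ a)]
        ring
    _ = _ := by
        rw [← hsubst]

/-- the ψ-fractional integral of order `(p+1)α` as a generalized ψ-convolution. -/
theorem psiInt_eq_psiConvolution (a b : ℝ) (hab : a < b) (ψ ψinv : ℝ → ℝ)
    (hψ : ContDiffOn ℝ 1 ψ (Set.Icc a b))
    (hψ' : ∀ t ∈ Set.Icc a b, 0 < deriv ψ t)
    (hinv : ∀ x ∈ Set.Icc a b, ψinv (ψ x) = x)
    (hinv' : ∀ y ∈ Set.Icc (ψ a) (ψ b), ψ (ψinv y) = y)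
    (p : ℕ) (α : ℝ) (hα : α ∈ Set.Ioc (0 : ℝ) 1)
    (f : ℝ → ℝ) (hf : PiecewiseContinuousOn f a b) :
    ∀ t ∈ Set.Icc a b,
      psiInt ψ ((p + 1 : ℝ) * α) a f t =
        ∫ s in a..t,
          (ψ s - ψ a) ^ ((p : ℝ) * α + α - 1) / Real.Gamma ((p : ℝ) * α + α) *
            f (ψinv (ψ t + ψ a - ψ s)) * deriv ψ s :=
  psiInt_eq_psiConvolution_general a b ψ ψinv hψ hψ' hinv p α f
end

section
/- Let ψ ∈ C¹([a,b]) with ψ'(t) > 0 on [a,b], let α ∈ (0,1), and let f ∈ C¹([a,b]). Then the ψ-Riemann–Liouville fractional integral of order α of the ψ-Caputo fractional derivative of order α of f recovers f up to its initial value: I_a^{α,ψ} ( ^C D_a^{α,ψ} f )(t) = f(t) − f(a) for every t ∈ [a,b]. -/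
open MeasureTheory intervalIntegral Real

/-- The ψ-Caputo fractional derivative of order `α ∈ (0,1)` of `f`, with base point `a`
(for `α = 1` it is the ordinary derivative). -/
noncomputable def psiCaputo (ψ : ℝ → ℝ) (α a : ℝ) (f : ℝ → ℝ) (t : ℝ) : ℝ :=
  if α = 1 then deriv f t
  else (1 / Real.Gamma (1 - α)) * ∫ s in a..t, (ψ t - ψ s) ^ (-α) * deriv f s

/-! Writing out both operators, `I^{α,ψ} (D^{α,ψ} f)(t)` is an integral of
`ψ'(s) (ψ t - ψ s)^(α-1) (ψ s - ψ u)^(-α) f'(u)` over the triangle `a < u < s < t`. The kernel is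
nonnegative with bounded `s`-integrals and `f'` is integrable, so Fubini lets us integrate in `s`
first. The substitution
`x = ψ s` turns that inner integral into the Beta integral
`∫_{ψ u}^{ψ t} (x - ψ u)^(-α) (ψ t - x)^(α-1) dx = B(1 - α, α) = Γ(α) Γ(1 - α)`, independent of `u`,
which cancels the normalising constants and leaves `∫_a^t f'(u) du = f t - f a`. -/

open Set ProbabilityTheory Function

section Beta

variable {p q c d : ℝ}

lemma betaPDFReal_nonneg (hp : 0 < p) (hq : 0 < q) (x : ℝ) : 0 ≤ betaPDFReal p q x := by
  by_cases hx : 0 < x ∧ x < 1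
  · exact (betaPDFReal_pos hx.1 hx.2 hp hq).le
  · simp [betaPDFReal, hx]

lemma lintegral_ofReal_betaPDFReal (hp : 0 < p) (hq : 0 < q) :
    ∫⁻ x, ENNReal.ofReal (betaPDFReal p q x) = 1 :=
  lintegral_betaPDF_eq_one hp hq

lemma integrable_betaPDFReal (hp : 0 < p) (hq : 0 < q) : Integrable (betaPDFReal p q) :=
  ⟨(measurable_betaPDFReal p q).aestronglyMeasurable,
    (hasFiniteIntegral_iff_ofReal (ae_of_all _ (betaPDFReal_nonneg hp hq))).2 <| by
      simp [lintegral_ofReal_betaPDFReal hp hq]⟩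

lemma integral_betaPDFReal (hp : 0 < p) (hq : 0 < q) : ∫ x, betaPDFReal p q x = 1 := by
  rw [integral_eq_lintegral_of_nonneg_ae (ae_of_all _ (betaPDFReal_nonneg hp hq))
    (measurable_betaPDFReal p q).aestronglyMeasurable, lintegral_ofReal_betaPDFReal hp hq,
    ENNReal.toReal_one]

lemma rpow_mul_one_sub_rpow_eq_beta_mul_betaPDFReal (hp : 0 < p) (hq : 0 < q) {x : ℝ}
    (hx : x ∈ Ioo 0 1) :
    x ^ (p - 1) * (1 - x) ^ (q - 1) = beta p q * betaPDFReal p q x := by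
  rw [betaPDFReal, if_pos (show 0 < x ∧ x < 1 from hx), mul_assoc, ← mul_assoc,
    mul_one_div_cancel (beta_pos hp hq).ne', one_mul]

lemma integrableOn_rpow_mul_one_sub_rpow (hp : 0 < p) (hq : 0 < q) :
    IntegrableOn (fun x : ℝ ↦ x ^ (p - 1) * (1 - x) ^ (q - 1)) (Icc 0 1) := by
  rw [integrableOn_Icc_iff_integrableOn_Ioo]
  refine IntegrableOn.congr_fun ((integrable_betaPDFReal hp hq).integrableOn.const_mul (beta p q))
    (fun x hx ↦ (rpow_mul_one_sub_rpow_eq_beta_mul_betaPDFReal hp hq hx).symm) measurableSet_Ioo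

lemma integral_rpow_mul_one_sub_rpow (hp : 0 < p) (hq : 0 < q) :
    ∫ x in Icc (0 : ℝ) 1, x ^ (p - 1) * (1 - x) ^ (q - 1) = beta p q := by
  rw [integral_Icc_eq_integral_Ioo, setIntegral_congr_fun measurableSet_Ioo
    (fun x hx ↦ rpow_mul_one_sub_rpow_eq_beta_mul_betaPDFReal hp hq hx),
    MeasureTheory.integral_const_mul, setIntegral_eq_integral_of_forall_compl_eq_zero,
    integral_betaPDFReal hp hq, mul_one]
  intro x hx
  simp [betaPDFReal, show ¬(0 < x ∧ x < 1) from hx]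

lemma hasDerivAt_const_add_mul (c k y : ℝ) : HasDerivAt (fun y : ℝ ↦ c + k * y) k y := by
  simpa using ((hasDerivAt_id y).const_mul k).const_add c

lemma smul_sub_rpow_mul_sub_rpow_affine (hcd : c < d) {y : ℝ} (hy : y ∈ Icc 0 1) :
    (d - c) • ((c + (d - c) * y - c) ^ (p - 1) * (d - (c + (d - c) * y)) ^ (q - 1)) =
      (d - c) ^ (p + q - 1) * (y ^ (p - 1) * (1 - y) ^ (q - 1)) := by
  have hdc : 0 < d - c := sub_pos.2 hcd
  rw [show c + (d - c) * y - c = (d - c) * y by ring,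
    show d - (c + (d - c) * y) = (d - c) * (1 - y) by ring,
    mul_rpow hdc.le hy.1, mul_rpow hdc.le (sub_nonneg.2 hy.2),
    show p + q - 1 = 1 + (p - 1) + (q - 1) by ring, rpow_add hdc, rpow_add hdc, rpow_one,
    smul_eq_mul]
  ring

lemma integrableOn_sub_rpow_mul_sub_rpow (hcd : c < d) (hp : 0 < p) (hq : 0 < q) :
    IntegrableOn (fun x ↦ (x - c) ^ (p - 1) * (d - x) ^ (q - 1)) (Icc c d) := by
  have h := integrableOn_Icc_deriv_smul_iff_of_deriv_nonneg
    (g := fun x ↦ (x - c) ^ (p - 1) * (d - x) ^ (q - 1)) (by fun_prop)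
    (fun y _ ↦ hasDerivAt_const_add_mul c (d - c) y) (fun _ _ ↦ (sub_pos.2 hcd).le) zero_le_one
  simp only [mul_zero, add_zero, mul_one, add_sub_cancel] at h
  rw [← h]
  exact IntegrableOn.congr_fun ((integrableOn_rpow_mul_one_sub_rpow hp hq).const_mul _)
    (fun y hy ↦ (smul_sub_rpow_mul_sub_rpow_affine hcd hy).symm) measurableSet_Icc

lemma integral_sub_rpow_mul_sub_rpow (hcd : c < d) (hp : 0 < p) (hq : 0 < q) :
    ∫ x in Icc c d, (x - c) ^ (p - 1) * (d - x) ^ (q - 1) = (d - c) ^ (p + q - 1) * beta p q := by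
  have h := integral_Icc_deriv_smul_of_deriv_nonneg
    (g := fun x ↦ (x - c) ^ (p - 1) * (d - x) ^ (q - 1)) (by fun_prop)
    (fun y _ ↦ hasDerivAt_const_add_mul c (d - c) y) (fun _ _ ↦ (sub_pos.2 hcd).le) zero_le_one
  simp only [mul_zero, add_zero, mul_one, add_sub_cancel] at h
  rw [← h, setIntegral_congr_fun measurableSet_Icc
    (fun y hy ↦ smul_sub_rpow_mul_sub_rpow_affine hcd hy), MeasureTheory.integral_const_mul,
    integral_rpow_mul_one_sub_rpow hp hq]

end Beta

def triangle (a t : ℝ) : Set (ℝ × ℝ) := {p | a < p.2 ∧ p.2 < p.1 ∧ p.1 < t}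

section Triangle

variable {E : Type*} [NormedAddCommGroup E] {a t : ℝ}

lemma measurableSet_triangle : MeasurableSet (triangle a t) :=
  (measurableSet_lt measurable_const measurable_snd).inter
    ((measurableSet_lt measurable_snd measurable_fst).inter
      (measurableSet_lt measurable_fst measurable_const))

lemma indicator_triangle_eq_left (G : ℝ × ℝ → E) (s u : ℝ) :
    (triangle a t).indicator G (s, u) =
      (Ioo a t).indicator (fun s ↦ (Ioo a s).indicator (fun u ↦ G (s, u)) u) s := by
  simp only [indicator_apply, triangle, mem_Ioo]
  split_ifs <;> first | rfl | (exfalso; grind)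

lemma indicator_triangle_eq_right (G : ℝ × ℝ → E) (s u : ℝ) :
    (triangle a t).indicator G (s, u) =
      (Ioo a t).indicator (fun u ↦ (Ioo u t).indicator (fun s ↦ G (s, u)) s) u := by
  simp only [indicator_apply, triangle, mem_Ioo]
  split_ifs <;> first | rfl | (exfalso; grind)

lemma integral_indicator_triangle_left [NormedSpace ℝ E] (G : ℝ × ℝ → E) (s : ℝ) :
    ∫ u, (triangle a t).indicator G (s, u) =
      (Ioo a t).indicator (fun s ↦ ∫ u in Ioo a s, G (s, u)) s := by
  simp_rw [indicator_triangle_eq_left]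
  by_cases hs : s ∈ Ioo a t <;> simp [hs, MeasureTheory.integral_indicator measurableSet_Ioo]

lemma integral_indicator_triangle_right [NormedSpace ℝ E] (G : ℝ × ℝ → E) (u : ℝ) :
    ∫ s, (triangle a t).indicator G (s, u) =
      (Ioo a t).indicator (fun u ↦ ∫ s in Ioo u t, G (s, u)) u := by
  simp_rw [indicator_triangle_eq_right]
  by_cases hu : u ∈ Ioo a t <;> simp [hu, MeasureTheory.integral_indicator measurableSet_Ioo]

theorem setIntegral_Ioo_setIntegral_Ioo_swap [NormedSpace ℝ E] {F : ℝ → ℝ → E}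
    (hF : IntegrableOn (uncurry F) (triangle a t)) :
    ∫ s in Ioo a t, ∫ u in Ioo a s, F s u = ∫ u in Ioo a t, ∫ s in Ioo u t, F s u := by
  rw [← integrable_indicator_iff measurableSet_triangle, Measure.volume_eq_prod] at hF
  have h := integral_integral_swap (f := fun s u ↦ (triangle a t).indicator (uncurry F) (s, u)) hF
  simpa only [integral_indicator_triangle_left, integral_indicator_triangle_right,
    MeasureTheory.integral_indicator measurableSet_Ioo, uncurry_apply_pair] using h

theorem integrableOn_triangle_smul [NormedSpace ℝ E] {K : ℝ → ℝ → ℝ} {g : ℝ → E} {C : ℝ}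
    (hm : AEStronglyMeasurable (fun p : ℝ × ℝ ↦ K p.1 p.2 • g p.2)
      (volume.restrict (triangle a t)))
    (hK0 : ∀ p ∈ triangle a t, 0 ≤ K p.1 p.2)
    (hK : ∀ u ∈ Ioo a t, IntegrableOn (K · u) (Ioo u t))
    (hKC : ∀ u ∈ Ioo a t, ∫ s in Ioo u t, K s u ≤ C)
    (hg : IntegrableOn g (Ioo a t)) :
    IntegrableOn (fun p : ℝ × ℝ ↦ K p.1 p.2 • g p.2) (triangle a t) := by
  set G := fun p : ℝ × ℝ ↦ K p.1 p.2 • g p.2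
  have hm' : AEStronglyMeasurable ((triangle a t).indicator G) (volume.prod volume) := by
    rw [← Measure.volume_eq_prod]
    exact (aestronglyMeasurable_indicator_iff measurableSet_triangle).2 hm
  have hnorm (u : ℝ) : ∫ s, ‖(triangle a t).indicator G (s, u)‖ =
      (Ioo a t).indicator (fun u ↦ (∫ s in Ioo u t, K s u) * ‖g u‖) u := by
    simp_rw [norm_indicator_eq_indicator_norm, integral_indicator_triangle_right]
    by_cases hu : u ∈ Ioo a t
    · simp only [indicator_of_mem hu, G, norm_smul, ← MeasureTheory.integral_mul_const]
      refine setIntegral_congr_fun measurableSet_Ioo fun s hs ↦ ?_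
      rw [Real.norm_of_nonneg (hK0 (s, u) ⟨hu.1, hs.1, hs.2⟩)]
    · simp [hu]
  rw [← integrable_indicator_iff measurableSet_triangle, Measure.volume_eq_prod,
    integrable_prod_iff' hm']
  refine ⟨ae_of_all _ fun u ↦ ?_, ?_⟩
  · simp_rw [indicator_triangle_eq_right]
    by_cases hu : u ∈ Ioo a t
    · simp only [indicator_of_mem hu]
      exact IntegrableOn.integrable_indicator ((hK u hu).smul_const (g u)) measurableSet_Ioo
    · simp [hu]
  refine Integrable.mono' (IntegrableOn.integrable_indicator (hg.norm.const_mul C) measurableSet_Ioo)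
    hm'.norm.prod_swap.integral_prod_right' (ae_of_all _ fun u ↦ ?_)
  rw [hnorm]
  by_cases hu : u ∈ Ioo a t
  · have hK0' : 0 ≤ ∫ s in Ioo u t, K s u :=
      setIntegral_nonneg measurableSet_Ioo fun s hs ↦ hK0 (s, u) ⟨hu.1, hs.1, hs.2⟩
    rw [indicator_of_mem hu, indicator_of_mem hu, norm_mul, norm_norm, Real.norm_of_nonneg hK0']
    exact mul_le_mul_of_nonneg_right (hKC u hu) (norm_nonneg _)
  · simp [hu]

end Triangle

section FTC

variable {E : Type*} [NormedAddCommGroup E] [NormedSpace ℝ E] {f : ℝ → E} {a b : ℝ}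

lemma integrableOn_deriv_of_contDiffOn (hf : ContDiffOn ℝ 1 f (Icc a b)) :
    IntegrableOn (deriv f) (Ioo a b) := by
  rcases lt_or_ge a b with hab | hab
  · refine IntegrableOn.congr_fun
      (((hf.continuousOn_derivWithin (uniqueDiffOn_Icc hab) le_rfl).integrableOn_Icc).mono_set
        Ioo_subset_Icc_self)
      (fun x hx ↦ derivWithin_of_mem_nhds (Icc_mem_nhds hx.1 hx.2)) measurableSet_Ioo
  · simp [Ioo_eq_empty hab.not_gt]

lemma setIntegral_Ioo_deriv_of_contDiffOn [CompleteSpace E] (hab : a ≤ b)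
    (hf : ContDiffOn ℝ 1 f (Icc a b)) : ∫ x in Ioo a b, deriv f x = f b - f a := by
  rw [← integral_Ioc_eq_integral_Ioo, ← intervalIntegral.integral_of_le hab]
  refine integral_eq_sub_of_hasDerivAt_of_le hab hf.continuousOn (fun x hx ↦ ?_)
    ((intervalIntegrable_iff_integrableOn_Ioo_of_le hab).2 (integrableOn_deriv_of_contDiffOn hf))
  exact ((hf.differentiableOn one_ne_zero x (Ioo_subset_Icc_self hx)).differentiableAt
    (Icc_mem_nhds hx.1 hx.2)).hasDerivAt

end FTC

noncomputable def psiKernel (ψ : ℝ → ℝ) (α t s u : ℝ) : ℝ :=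
  deriv ψ s * (ψ t - ψ s) ^ (α - 1) * (ψ s - ψ u) ^ (-α)

section PsiKernel

variable {ψ : ℝ → ℝ} {α a u t : ℝ}

-- The exponent `1 - α - 1` (not `-α`) is the shape of the Beta integral `B(1 - α, α)`.
lemma psiKernel_eq_deriv_smul (s : ℝ) :
    psiKernel ψ α t s u = deriv ψ s • ((ψ s - ψ u) ^ (1 - α - 1) * (ψ t - ψ s) ^ (α - 1)) := by
  rw [psiKernel, sub_sub_cancel_left, smul_eq_mul]
  ring

lemma integrableOn_psiKernel (hut : u < t) (hψ : ContinuousOn ψ (Icc u t))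
    (hψ' : ∀ s ∈ Ioo u t, 0 < deriv ψ s) (hα : α ∈ Ioo 0 1) :
    IntegrableOn (psiKernel ψ α t · u) (Ioo u t) := by
  have hmono := strictMonoOn_of_deriv_pos (convex_Icc u t) hψ (by rwa [interior_Icc])
  simp_rw [psiKernel_eq_deriv_smul]
  rw [← integrableOn_Icc_iff_integrableOn_Ioo, integrableOn_Icc_deriv_smul_iff_of_deriv_nonneg
    (g := fun x ↦ (x - ψ u) ^ (1 - α - 1) * (ψ t - x) ^ (α - 1)) hψ
    (fun s hs ↦ (differentiableAt_of_deriv_ne_zero (hψ' s hs).ne').hasDerivAt)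
    (fun s hs ↦ (hψ' s hs).le) hut.le]
  exact integrableOn_sub_rpow_mul_sub_rpow
    (hmono (left_mem_Icc.2 hut.le) (right_mem_Icc.2 hut.le) hut) (sub_pos.2 hα.2) hα.1

lemma integral_psiKernel (hut : u < t) (hψ : ContinuousOn ψ (Icc u t))
    (hψ' : ∀ s ∈ Ioo u t, 0 < deriv ψ s) (hα : α ∈ Ioo 0 1) :
    ∫ s in Ioo u t, psiKernel ψ α t s u = Gamma α * Gamma (1 - α) := by
  have hmono := strictMonoOn_of_deriv_pos (convex_Icc u t) hψ (by rwa [interior_Icc])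
  simp_rw [psiKernel_eq_deriv_smul, ← integral_Icc_eq_integral_Ioo]
  rw [integral_Icc_deriv_smul_of_deriv_nonneg
    (g := fun x ↦ (x - ψ u) ^ (1 - α - 1) * (ψ t - x) ^ (α - 1)) hψ
    (fun s hs ↦ (differentiableAt_of_deriv_ne_zero (hψ' s hs).ne').hasDerivAt)
    (fun s hs ↦ (hψ' s hs).le) hut.le, integral_sub_rpow_mul_sub_rpow
    (hmono (left_mem_Icc.2 hut.le) (right_mem_Icc.2 hut.le) hut) (sub_pos.2 hα.2) hα.1,
    beta, sub_add_cancel, sub_self, rpow_zero, Gamma_one, div_one, one_mul, mul_comm]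

lemma StrictMonoOn.lt_of_mem_triangle (hmono : StrictMonoOn ψ (Icc a t)) {p : ℝ × ℝ}
    (hp : p ∈ triangle a t) : ψ p.2 < ψ p.1 ∧ ψ p.1 < ψ t := by
  obtain ⟨hau, hus, hst⟩ := hp
  exact ⟨hmono ⟨hau.le, (hus.trans hst).le⟩ ⟨(hau.trans hus).le, hst.le⟩ hus,
    hmono ⟨(hau.trans hus).le, hst.le⟩ ⟨((hau.trans hus).trans hst).le, le_rfl⟩ hst⟩

lemma psiKernel_nonneg (hmono : StrictMonoOn ψ (Icc a t)) (hψ' : ∀ s ∈ Ioo a t, 0 < deriv ψ s)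
    {p : ℝ × ℝ} (hp : p ∈ triangle a t) : 0 ≤ psiKernel ψ α t p.1 p.2 := by
  obtain ⟨hψus, hψst⟩ := hmono.lt_of_mem_triangle hp
  exact mul_nonneg (mul_nonneg (hψ' p.1 ⟨hp.1.trans hp.2.1, hp.2.2⟩).le
    (rpow_nonneg (sub_nonneg.2 hψst.le) _)) (rpow_nonneg (sub_nonneg.2 hψus.le) _)

lemma continuousOn_psiKernel (hψ : ContDiffOn ℝ 1 ψ (Icc a t))
    (hmono : StrictMonoOn ψ (Icc a t)) :
    ContinuousOn (fun p : ℝ × ℝ ↦ psiKernel ψ α t p.1 p.2) (triangle a t) := by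
  have hd : ContinuousOn (deriv ψ) (Ioo a t) :=
    (hψ.mono Ioo_subset_Icc_self).continuousOn_deriv_of_isOpen isOpen_Ioo le_rfl
  have h1 : MapsTo Prod.fst (triangle a t) (Ioo a t) := fun p hp ↦ ⟨hp.1.trans hp.2.1, hp.2.2⟩
  have h2 : MapsTo Prod.snd (triangle a t) (Icc a t) :=
    fun p hp ↦ ⟨hp.1.le, (hp.2.1.trans hp.2.2).le⟩
  have hψ1 := hψ.continuousOn.comp continuousOn_fst (h1.mono_right Ioo_subset_Icc_self)
  have hψ2 := hψ.continuousOn.comp continuousOn_snd h2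
  exact ((hd.comp continuousOn_fst h1).mul ((continuousOn_const.sub hψ1).rpow_const
    fun p hp ↦ Or.inl (sub_pos.2 (hmono.lt_of_mem_triangle hp).2).ne')).mul
    ((hψ1.sub hψ2).rpow_const fun p hp ↦ Or.inl (sub_pos.2 (hmono.lt_of_mem_triangle hp).1).ne')

end PsiKernel

lemma psiInt_psiCaputo_eq_setIntegral_triangle {ψ f : ℝ → ℝ} {α a t : ℝ} (hat : a ≤ t)
    (hα : α ≠ 1) :
    psiInt ψ α a (psiCaputo ψ α a f) t = (Gamma α * Gamma (1 - α))⁻¹ *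
      ∫ s in Ioo a t, ∫ u in Ioo a s, psiKernel ψ α t s u * deriv f u := by
  have h (s : ℝ) (hs : s ∈ Ioo a t) : deriv ψ s * (ψ t - ψ s) ^ (α - 1) * psiCaputo ψ α a f s =
      (Gamma (1 - α))⁻¹ * ∫ u in Ioo a s, psiKernel ψ α t s u * deriv f u := by
    rw [psiCaputo, if_neg hα, integral_of_le hs.1.le, integral_Ioc_eq_integral_Ioo,
      ← MeasureTheory.integral_const_mul, ← MeasureTheory.integral_const_mul,
      ← MeasureTheory.integral_const_mul]
    congr 1 with u
    rw [psiKernel]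
    ring
  rw [psiInt, integral_of_le hat, integral_Ioc_eq_integral_Ioo,
    setIntegral_congr_fun measurableSet_Ioo h, MeasureTheory.integral_const_mul, mul_inv]
  ring

theorem psiInt_psiCaputo_of_lt {ψ f : ℝ → ℝ} {α a t : ℝ} (hat : a < t)
    (hψ : ContDiffOn ℝ 1 ψ (Icc a t)) (hψ' : ∀ s ∈ Ioo a t, 0 < deriv ψ s) (hα : α ∈ Ioo 0 1)
    (hf : ContDiffOn ℝ 1 f (Icc a t)) :
    psiInt ψ α a (psiCaputo ψ α a f) t = f t - f a := by
  have hmono := strictMonoOn_of_deriv_pos (convex_Icc a t) hψ.continuousOn (by rwa [interior_Icc])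
  have hψu (u : ℝ) (hu : u ∈ Ioo a t) : ContinuousOn ψ (Icc u t) :=
    hψ.continuousOn.mono (Icc_subset_Icc_left hu.1.le)
  have hψ'u (u : ℝ) (hu : u ∈ Ioo a t) : ∀ s ∈ Ioo u t, 0 < deriv ψ s :=
    fun s hs ↦ hψ' s (Ioo_subset_Ioo_left hu.1.le hs)
  have hKint (u : ℝ) (hu : u ∈ Ioo a t) := integrableOn_psiKernel hu.2 (hψu u hu) (hψ'u u hu) hα
  have hKval (u : ℝ) (hu : u ∈ Ioo a t) := integral_psiKernel hu.2 (hψu u hu) (hψ'u u hu) hα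
  have hdf : ContinuousOn (fun p : ℝ × ℝ ↦ deriv f p.2) (triangle a t) :=
    ((hf.mono Ioo_subset_Icc_self).continuousOn_deriv_of_isOpen isOpen_Ioo le_rfl).comp
      continuousOn_snd fun p hp ↦ ⟨hp.1, hp.2.1.trans hp.2.2⟩
  have hint : IntegrableOn (fun p : ℝ × ℝ ↦ psiKernel ψ α t p.1 p.2 • deriv f p.2)
      (triangle a t) :=
    integrableOn_triangle_smul
      (((continuousOn_psiKernel hψ hmono).smul hdf).aestronglyMeasurable measurableSet_triangle)
      (fun p hp ↦ psiKernel_nonneg hmono hψ' hp) hKint (fun u hu ↦ (hKval u hu).le)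
      (integrableOn_deriv_of_contDiffOn hf)
  have hΓ : Gamma α * Gamma (1 - α) ≠ 0 :=
    (mul_pos (Gamma_pos_of_pos hα.1) (Gamma_pos_of_pos (sub_pos.2 hα.2))).ne'
  calc psiInt ψ α a (psiCaputo ψ α a f) t
      = (Gamma α * Gamma (1 - α))⁻¹ *
          ∫ s in Ioo a t, ∫ u in Ioo a s, psiKernel ψ α t s u * deriv f u :=
        psiInt_psiCaputo_eq_setIntegral_triangle hat.le hα.2.ne
    _ = (Gamma α * Gamma (1 - α))⁻¹ * ∫ u in Ioo a t, Gamma α * Gamma (1 - α) * deriv f u := by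
        rw [setIntegral_Ioo_setIntegral_Ioo_swap (F := fun s u ↦ psiKernel ψ α t s u * deriv f u)
          hint]
        congr 1
        refine setIntegral_congr_fun measurableSet_Ioo fun u hu ↦ ?_
        rw [MeasureTheory.integral_mul_const, hKval u hu]
    _ = ∫ u in Ioo a t, deriv f u := by
        rw [MeasureTheory.integral_const_mul, inv_mul_cancel_left₀ hΓ]
    _ = f t - f a := setIntegral_Ioo_deriv_of_contDiffOn hat.le hf

theorem psiInt_psiCaputo_general (a b : ℝ) (ψ : ℝ → ℝ)
    (hψ : ContDiffOn ℝ 1 ψ (Set.Icc a b))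
    (hψ' : ∀ t ∈ Set.Icc a b, 0 < deriv ψ t)
    (α : ℝ) (hα : α ∈ Set.Ioo (0 : ℝ) 1)
    (f : ℝ → ℝ) (hf : ContDiffOn ℝ 1 f (Set.Icc a b)) :
    ∀ t ∈ Set.Icc a b,
      psiInt ψ α a (psiCaputo ψ α a f) t = f t - f a := by
  rintro t ⟨hat, htb⟩
  rcases hat.eq_or_lt with rfl | hat
  · simp [psiInt]
  have hsub : Icc a t ⊆ Icc a b := Icc_subset_Icc_right htb
  exact psiInt_psiCaputo_of_lt hat (hψ.mono hsub) (fun s hs ↦ hψ' s (hsub (Ioo_subset_Icc_self hs)))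
    hα (hf.mono hsub)

/-- `I_a^{α,ψ} (^C D_a^{α,ψ} f)(t) = f(t) − f(a)`. -/
theorem psiInt_psiCaputo (a b : ℝ) (hab : a < b) (ψ : ℝ → ℝ)
    (hψ : ContDiffOn ℝ 1 ψ (Set.Icc a b))
    (hψ' : ∀ t ∈ Set.Icc a b, 0 < deriv ψ t)
    (α : ℝ) (hα : α ∈ Set.Ioo (0 : ℝ) 1)
    (f : ℝ → ℝ) (hf : ContDiffOn ℝ 1 f (Set.Icc a b)) :
    ∀ t ∈ Set.Icc a b,
      psiInt ψ α a (psiCaputo ψ α a f) t = f t - f a :=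
  psiInt_psiCaputo_general a b ψ hψ hψ' α hα f hf
end

section
/- Let ψ ∈ C¹([a,b]) with ψ'(t) > 0 on [a,b], α ∈ (0,1], A an n×n real matrix, and u : [a,b] → ℝⁿ continuous. Then for every t ∈ (a,b] the series of generalized ψ-convolutions can be resummed into a Mittag–Leffler kernel: Σ_{l=0}^{∞} A^{l} ∫_a^t ((ψ(s) − ψ(a))^{lα+α−1}/Γ(lα+α)) u(ψ^{−1}(ψ(t)+ψ(a)−ψ(s))) ψ'(s) ds = ∫_a^t ψ'(s) (ψ(t) − ψ(s))^{α−1} E_{α,α}(A (ψ(t) − ψ(s))^{α}) u(s) ds, where E_{α,α} is the two-parameter matrix Mittag–Leffler function. -/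
/-!
Under `y = ψ s`, the reflection `y ↦ ψ t + ψ a - y` of `[ψ a, ψ t]` turns the `l`-th convolution
into `∫ ψ'(s) (ψ t - ψ s)^(lα+α-1) / Γ(lα+α) u(s) ds`; no integrability is needed for this, as
the one-dimensional change of variables holds unconditionally. The series can then be summed under
the integral: the `l`-th integrand has integral of norm at most
`sup ‖u‖ ‖A‖^l (ψ t - ψ a)^(lα+α) / Γ(lα+α+1)`, a convergent series since `Γ(x + α) / Γ(x) → ∞`
by the log-convexity of `Γ`; pointwise, the integrands sum to the Mittag–Leffler kernel.
-/

open MeasureTheory intervalIntegral Real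

/-- The two-parameter matrix Mittag–Leffler function
`E_{α,α'}(A) = Σ_{l=0}^{∞} A^l / Γ(αl + α')`. -/
noncomputable def mlMatrix {n : ℕ} (α α' : ℝ) (A : Matrix (Fin n) (Fin n) ℝ) :
    Matrix (Fin n) (Fin n) ℝ :=
  ∑' l : ℕ, (1 / Real.Gamma (α * l + α')) • A ^ l

open Set Filter Topology Matrix

namespace Real

theorem rpow_mul_Gamma_add_one_le {x s : ℝ} (hx : 0 < x) (hs : 0 < s) (hs1 : s ≤ 1) :
    (x + s) ^ s * Gamma (x + 1) ≤ (x + s) * Gamma (x + s) := by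
  rcases hs1.eq_or_lt with rfl | hs1
  · simp
  have hxs : 0 < x + s := by positivity
  have hΓ : 0 < Gamma (x + s) := Gamma_pos_of_pos hxs
  -- log-convexity of `Γ`, with `x + 1` the convex combination `s • (x + s) + (1 - s) • (x + s + 1)`
  have key := Gamma_mul_add_mul_le_rpow_Gamma_mul_rpow_Gamma hxs (by positivity : 0 < x + s + 1)
    hs (sub_pos.2 hs1) (add_sub_cancel s 1)
  rw [show s * (x + s) + (1 - s) * (x + s + 1) = x + 1 by ring, Gamma_add_one hxs.ne',
    mul_rpow hxs.le hΓ.le] at key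
  calc (x + s) ^ s * Gamma (x + 1)
      ≤ (x + s) ^ s * (Gamma (x + s) ^ s * ((x + s) ^ (1 - s) * Gamma (x + s) ^ (1 - s))) := by
        gcongr
    _ = (x + s) ^ (s + (1 - s)) * Gamma (x + s) ^ (s + (1 - s)) := by
        rw [rpow_add hxs, rpow_add hΓ]; ring
    _ = (x + s) * Gamma (x + s) := by simp

theorem eventually_mul_Gamma_le_Gamma_add {α : ℝ} (hα : 0 < α) (c : ℝ) :
    ∀ᶠ x in atTop, c * Gamma x ≤ Gamma (x + α) := by
  set s := min α 1
  have hs : 0 < s := lt_min hα one_pos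
  have hgrow : Tendsto (fun x => (x + s) ^ s) atTop atTop :=
    (tendsto_rpow_atTop hs).comp (tendsto_atTop_add_const_right _ s tendsto_id)
  filter_upwards [eventually_ge_atTop 2, hgrow.eventually_ge_atTop (2 * c)] with x hx hxc
  have hxs : 0 < x + s := by positivity
  have hΓ : 0 < Gamma x := Gamma_pos_of_pos (by linarith)
  have hs1 : s ≤ 1 := min_le_right α 1
  calc c * Gamma x ≤ (x + s) ^ s * x / (x + s) * Gamma x := by
        gcongr
        rw [le_div_iff₀ hxs]
        nlinarith [rpow_nonneg hxs.le s]
    _ = (x + s) ^ s * Gamma (x + 1) / (x + s) := by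
        rw [Gamma_add_one (by positivity)]; ring
    _ ≤ Gamma (x + s) := by
        rw [div_le_iff₀ hxs, mul_comm (Gamma _)]
        exact rpow_mul_Gamma_add_one_le (by positivity) hs hs1
    _ ≤ Gamma (x + α) :=
        Gamma_strictMonoOn_Ici.monotoneOn (by simp; linarith) (by simp; linarith)
          (by gcongr; exact min_le_left α 1)

theorem summable_pow_div_Gamma {α : ℝ} (hα : 0 < α) (β C : ℝ) :
    Summable fun l : ℕ => C ^ l / Gamma (α * l + β) := by
  have harg : Tendsto (fun l : ℕ => α * l + β) atTop atTop :=
    tendsto_atTop_add_const_right _ β (tendsto_natCast_atTop_atTop.const_mul_atTop hα)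
  refine summable_of_ratio_norm_eventually_le (r := 1 / 2) (by norm_num) ?_
  filter_upwards [harg.eventually (eventually_mul_Gamma_le_Gamma_add hα (2 * |C|)),
    harg.eventually_gt_atTop 0] with l hΓ hpos
  have hΓl : 0 < Gamma (α * l + β) := Gamma_pos_of_pos hpos
  have hΓl' : 0 < Gamma (α * l + β + α) := Gamma_pos_of_pos (by linarith)
  rw [show α * ↑(l + 1) + β = α * l + β + α by push_cast; ring, norm_div, norm_div, norm_pow,
    norm_pow, norm_of_nonneg hΓl.le, norm_of_nonneg hΓl'.le, pow_succ, div_le_iff₀ hΓl']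
  calc ‖C‖ ^ l * ‖C‖ = 1 / 2 * (‖C‖ ^ l / Gamma (α * l + β)) * (2 * |C| * Gamma (α * l + β)) := by
        field_simp; simp
    _ ≤ 1 / 2 * (‖C‖ ^ l / Gamma (α * l + β)) * Gamma (α * l + β + α) := by gcongr

end Real

section LinftyOpNorm

attribute [local instance] Matrix.linftyOpNormedRing Matrix.linftyOpNormedAlgebra

theorem Matrix.exists_norm_pow_mulVec_le {n : ℕ} (A : Matrix (Fin n) (Fin n) ℝ) :
    ∃ C : ℝ, 0 ≤ C ∧ ∀ (l : ℕ) (v : Fin n → ℝ), ‖(A ^ l) *ᵥ v‖ ≤ C ^ l * ‖v‖ := by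
  refine ⟨‖A‖, norm_nonneg A, fun l => ?_⟩
  induction l with
  | zero => simp
  | succ l ih =>
    intro v
    rw [pow_succ, ← mulVec_mulVec, pow_succ, mul_assoc]
    exact (ih _).trans (by gcongr; exact linfty_opNorm_mulVec A v)

theorem summable_mlMatrix {n : ℕ} {α : ℝ} (hα : 0 < α) (α' : ℝ) (B : Matrix (Fin n) (Fin n) ℝ) :
    Summable fun l : ℕ => (1 / Gamma (α * l + α')) • B ^ l := by
  have : CompleteSpace (Matrix (Fin n) (Fin n) ℝ) := FiniteDimensional.complete ℝ _
  refine .of_norm_bounded_eventually (Real.summable_pow_div_Gamma hα α' ‖B‖).abs ?_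
  filter_upwards [Nat.cofinite_eq_atTop ▸ eventually_gt_atTop 0] with l hl
  rw [abs_div, abs_pow, abs_norm, one_div]
  refine (norm_smul_le _ _).trans ?_
  rw [norm_inv, norm_eq_abs, inv_mul_eq_div]
  gcongr
  exact norm_pow_le' B hl

end LinftyOpNorm

theorem hasSum_mlMatrix_mulVec {n : ℕ} {α : ℝ} (hα : 0 < α) (α' : ℝ)
    (B : Matrix (Fin n) (Fin n) ℝ) (v : Fin n → ℝ) :
    HasSum (fun l : ℕ => (1 / Gamma (α * l + α')) • (B ^ l *ᵥ v)) (mlMatrix α α' B *ᵥ v) := by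
  have := (summable_mlMatrix hα α' B).hasSum.map (mulVec.addMonoidHomLeft v)
    (continuous_id.matrix_mulVec continuous_const)
  simpa [mlMatrix, Function.comp_def, smul_mulVec, mulVec.addMonoidHomLeft] using this

theorem hasSum_rpow_div_Gamma_smul_pow_mulVec {n : ℕ} {α x : ℝ} (hα : 0 < α) (hx : 0 < x)
    (A : Matrix (Fin n) (Fin n) ℝ) (v : Fin n → ℝ) :
    HasSum (fun l : ℕ => (x ^ ((l : ℝ) * α + α - 1) / Gamma ((l : ℝ) * α + α)) • (A ^ l *ᵥ v))
      (x ^ (α - 1) • (mlMatrix α α (x ^ α • A) *ᵥ v)) := by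
  convert (hasSum_mlMatrix_mulVec hα α (x ^ α • A) v).const_smul (x ^ (α - 1)) using 1
  funext l
  rw [smul_pow, smul_mulVec, smul_smul, smul_smul, ← rpow_mul_natCast hx.le,
    show (l : ℝ) * α + α - 1 = α - 1 + α * l by ring, rpow_add hx, mul_comm (l : ℝ) α]
  ring_nf

section ChangeOfVariables

variable {E : Type*} [NormedAddCommGroup E] [NormedSpace ℝ E] {ψ ψ' : ℝ → ℝ} {a t : ℝ}

theorem monotoneOn_Icc_of_hasDerivAt_nonneg (hψ : ContinuousOn ψ (Icc a t))
    (hψ' : ∀ x ∈ Ioo a t, HasDerivAt ψ (ψ' x) x) (hψ'0 : ∀ x ∈ Ioo a t, 0 ≤ ψ' x) :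
    MonotoneOn ψ (Icc a t) :=
  monotoneOn_of_hasDerivWithinAt_nonneg (convex_Icc a t) hψ
    (by rw [interior_Icc]; exact fun x hx => (hψ' x hx).hasDerivWithinAt) (by rwa [interior_Icc])

theorem integral_deriv_smul_comp_of_deriv_nonneg (hat : a ≤ t) (hψ : ContinuousOn ψ (Icc a t))
    (hψ' : ∀ x ∈ Ioo a t, HasDerivAt ψ (ψ' x) x) (hψ'0 : ∀ x ∈ Ioo a t, 0 ≤ ψ' x) (g : ℝ → E) :
    ∫ s in a..t, ψ' s • g (ψ s) = ∫ y in ψ a..ψ t, g y := by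
  have hmono : ψ a ≤ ψ t := monotoneOn_Icc_of_hasDerivAt_nonneg hψ hψ' hψ'0
    (left_mem_Icc.2 hat) (right_mem_Icc.2 hat) hat
  rw [integral_of_le hat, integral_of_le hmono, ← integral_Icc_eq_integral_Ioc,
    ← integral_Icc_eq_integral_Ioc, integral_Icc_deriv_smul_of_deriv_nonneg hψ hψ' hψ'0 hat]

theorem integral_deriv_smul_comp_reflect (hat : a ≤ t) (hψ : ContinuousOn ψ (Icc a t))
    (hψ' : ∀ x ∈ Ioo a t, HasDerivAt ψ (ψ' x) x) (hψ'0 : ∀ x ∈ Ioo a t, 0 ≤ ψ' x) (g : ℝ → E) :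
    ∫ s in a..t, ψ' s • g (ψ t + ψ a - ψ s) = ∫ s in a..t, ψ' s • g (ψ s) := by
  rw [integral_deriv_smul_comp_of_deriv_nonneg hat hψ hψ' hψ'0 (fun y => g (ψ t + ψ a - y)),
    integral_deriv_smul_comp_of_deriv_nonneg hat hψ hψ' hψ'0, integral_comp_sub_left]
  simp

theorem integrableOn_rpow_div_Gamma_mul_deriv {β : ℝ} (hβ : 0 < β) (hat : a ≤ t)
    (hψ : ContinuousOn ψ (Icc a t)) (hψ' : ∀ x ∈ Ioo a t, HasDerivAt ψ (ψ' x) x)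
    (hψ'0 : ∀ x ∈ Ioo a t, 0 ≤ ψ' x) :
    IntegrableOn (fun s => (ψ t - ψ s) ^ (β - 1) / Gamma β * ψ' s) (Icc a t) := by
  have h := ((intervalIntegrable_rpow' (r := β - 1) (by linarith) (a := ψ t - ψ a)
    (b := 0)).comp_sub_left (ψ t)).div_const (Gamma β)
  rw [sub_sub_cancel, sub_zero] at h
  simpa only [smul_eq_mul, mul_comm (ψ' _)] using
    (integrableOn_Icc_deriv_smul_iff_of_deriv_nonneg hψ hψ' hψ'0 hat).2
      (((intervalIntegrable_iff').1 h).mono_set Icc_subset_uIcc)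

theorem integral_rpow_div_Gamma_mul_deriv {β : ℝ} (hβ : 0 < β) (hat : a ≤ t)
    (hψ : ContinuousOn ψ (Icc a t)) (hψ' : ∀ x ∈ Ioo a t, HasDerivAt ψ (ψ' x) x)
    (hψ'0 : ∀ x ∈ Ioo a t, 0 ≤ ψ' x) :
    ∫ s in a..t, (ψ t - ψ s) ^ (β - 1) / Gamma β * ψ' s = (ψ t - ψ a) ^ β / Gamma (β + 1) := by
  have h := integral_deriv_smul_comp_of_deriv_nonneg hat hψ hψ' hψ'0
    fun y => (ψ t - y) ^ (β - 1) / Gamma β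
  simp only [smul_eq_mul, mul_comm (ψ' _)] at h
  rw [h, integral_comp_sub_left (fun y => y ^ (β - 1) / Gamma β), sub_self,
    intervalIntegral.integral_div, integral_rpow (Or.inl (by linarith)), sub_add_cancel,
    zero_rpow hβ.ne', sub_zero, Gamma_add_one hβ.ne', div_div, mul_comm β]

end ChangeOfVariables

theorem summable_integral_norm_rpow_div_Gamma_mul_deriv_smul {n : ℕ} {ψ ψ' : ℝ → ℝ}
    {a t α : ℝ} (hat : a ≤ t) (hψ : ContinuousOn ψ (Icc a t))
    (hψ' : ∀ x ∈ Ioo a t, HasDerivAt ψ (ψ' x) x) (hψ'0 : ∀ x ∈ Ioo a t, 0 ≤ ψ' x) (hα : 0 < α)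
    (A : Matrix (Fin n) (Fin n) ℝ) {u : ℝ → Fin n → ℝ} (hu : ContinuousOn u (Icc a t)) :
    Summable fun l : ℕ => ∫ s in Ioo a t,
      ‖((ψ t - ψ s) ^ ((l : ℝ) * α + α - 1) / Gamma ((l : ℝ) * α + α) * ψ' s) • (A ^ l *ᵥ u s)‖ := by
  have hmono := monotoneOn_Icc_of_hasDerivAt_nonneg hψ hψ' hψ'0
  have hX : 0 ≤ ψ t - ψ a := sub_nonneg.2 (hmono (left_mem_Icc.2 hat) (right_mem_Icc.2 hat) hat)
  obtain ⟨C, hC0, hC⟩ := A.exists_norm_pow_mulVec_le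
  obtain ⟨M, hM⟩ := isCompact_Icc.exists_bound_of_continuousOn hu
  refine .of_nonneg_of_le (fun l => integral_nonneg fun s => norm_nonneg _) (fun l => ?_)
    ((Real.summable_pow_div_Gamma hα (α + 1) (C * (ψ t - ψ a) ^ α)).mul_left
      (M * (ψ t - ψ a) ^ α))
  have hβ : 0 < (l : ℝ) * α + α := by positivity
  have hK := integrableOn_rpow_div_Gamma_mul_deriv hβ hat hψ hψ' hψ'0
  have hF := hK.smul_continuousOn (g := fun s => A ^ l *ᵥ u s)
    ((continuous_const.matrix_mulVec continuous_id).comp_continuousOn hu) isCompact_Icc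
  have hF_le : ∀ s ∈ Ioo a t,
      ‖((ψ t - ψ s) ^ ((l : ℝ) * α + α - 1) / Gamma ((l : ℝ) * α + α) * ψ' s) • (A ^ l *ᵥ u s)‖
        ≤ (ψ t - ψ s) ^ ((l : ℝ) * α + α - 1) / Gamma ((l : ℝ) * α + α) * ψ' s * (C ^ l * M) := by
    intro s hs
    have hXs : 0 ≤ ψ t - ψ s :=
      sub_nonneg.2 (hmono (Ioo_subset_Icc_self hs) (right_mem_Icc.2 hat) hs.2.le)
    have hψ's := hψ'0 s hs
    rw [norm_smul, norm_of_nonneg (by positivity)]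
    gcongr
    exact (hC l (u s)).trans (by gcongr; exact hM s (Ioo_subset_Icc_self hs))
  calc _ ≤ ∫ s in Ioo a t,
        (ψ t - ψ s) ^ ((l : ℝ) * α + α - 1) / Gamma ((l : ℝ) * α + α) * ψ' s * (C ^ l * M) :=
        setIntegral_mono_on (IntegrableOn.mono_set hF.norm Ioo_subset_Icc_self)
          (IntegrableOn.mono_set (hK.mul_const _) Ioo_subset_Icc_self) measurableSet_Ioo hF_le
    _ = M * (ψ t - ψ a) ^ α * ((C * (ψ t - ψ a) ^ α) ^ l / Gamma (α * l + (α + 1))) := by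
      rw [MeasureTheory.integral_mul_const, ← integral_Ioc_eq_integral_Ioo, ← integral_of_le hat,
        integral_rpow_div_Gamma_mul_deriv hβ hat hψ hψ' hψ'0, mul_pow, ← rpow_mul_natCast hX,
        rpow_add' hX hβ.ne']
      ring_nf

theorem tsum_pow_mulVec_integral_eq_integral_mlMatrix_mulVec {n : ℕ} {ψ ψ' : ℝ → ℝ}
    {a t α : ℝ} (hat : a ≤ t) (hψ : ContinuousOn ψ (Icc a t))
    (hψ' : ∀ x ∈ Ioo a t, HasDerivAt ψ (ψ' x) x) (hψ'0 : ∀ x ∈ Ioo a t, 0 < ψ' x) (hα : 0 < α)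
    (A : Matrix (Fin n) (Fin n) ℝ) {u : ℝ → Fin n → ℝ} (hu : ContinuousOn u (Icc a t)) :
    ∑' l : ℕ, A ^ l *ᵥ ∫ s in a..t,
        ((ψ t - ψ s) ^ ((l : ℝ) * α + α - 1) / Gamma ((l : ℝ) * α + α) * ψ' s) • u s =
      ∫ s in a..t, (ψ' s * (ψ t - ψ s) ^ (α - 1)) • (mlMatrix α α ((ψ t - ψ s) ^ α • A) *ᵥ u s) := by
  set K : ℕ → ℝ → ℝ := fun l s =>
    (ψ t - ψ s) ^ ((l : ℝ) * α + α - 1) / Gamma ((l : ℝ) * α + α) * ψ' s with hK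
  have hψ'0' : ∀ x ∈ Ioo a t, 0 ≤ ψ' x := fun x hx => (hψ'0 x hx).le
  have hK_int : ∀ l : ℕ, IntegrableOn (K l) (Icc a t) := fun l =>
    integrableOn_rpow_div_Gamma_mul_deriv (by positivity) hat hψ hψ' hψ'0'
  have hpull : ∀ l : ℕ, A ^ l *ᵥ ∫ s in a..t, K l s • u s =
      ∫ s in Ioo a t, K l s • (A ^ l *ᵥ u s) := by
    intro l
    have hint : IntervalIntegrable (fun s => K l s • u s) volume a t :=
      (intervalIntegrable_iff_integrableOn_Icc_of_le hat).2
        ((hK_int l).smul_continuousOn hu isCompact_Icc)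
    rw [← integral_Ioc_eq_integral_Ioo, ← integral_of_le hat]
    simpa [mulVec_smul] using
      ((mulVecLin (A ^ l)).toContinuousLinearMap.intervalIntegral_comp_comm hint).symm
  have hF_int : ∀ l : ℕ, IntegrableOn (fun s => K l s • (A ^ l *ᵥ u s)) (Ioo a t) := fun l =>
    ((hK_int l).smul_continuousOn ((continuous_const.matrix_mulVec continuous_id).comp_continuousOn
      hu) isCompact_Icc).mono_set Ioo_subset_Icc_self
  rw [tsum_congr hpull, integral_tsum_of_summable_integral_norm hF_int
    (summable_integral_norm_rpow_div_Gamma_mul_deriv_smul hat hψ hψ' hψ'0' hα A hu),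
    integral_of_le hat, integral_Ioc_eq_integral_Ioo]
  refine setIntegral_congr_fun measurableSet_Ioo fun s hs => ?_
  have hψst : 0 < ψ t - ψ s := sub_pos.2 <|
    strictMonoOn_of_hasDerivWithinAt_pos (convex_Icc a t) hψ
      (by rw [interior_Icc]; exact fun x hx => (hψ' x hx).hasDerivWithinAt)
      (by rwa [interior_Icc]) (Ioo_subset_Icc_self hs) (right_mem_Icc.2 hat) hs.2
  rw [mul_smul]
  refine (((hasSum_rpow_div_Gamma_smul_pow_mulVec hα hψst A (u s)).const_smul
    (ψ' s)).congr_fun fun l => ?_).tsum_eq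
  rw [hK, smul_smul, mul_comm (ψ' s)]

theorem conv_series_eq_mittagLeffler_kernel_general (a b : ℝ) (ψ ψinv : ℝ → ℝ)
    (hψ : ContDiffOn ℝ 1 ψ (Set.Icc a b))
    (hψ' : ∀ t ∈ Set.Icc a b, 0 < deriv ψ t)
    (hinv : ∀ x ∈ Set.Icc a b, ψinv (ψ x) = x)
    (α : ℝ) (hα : α ∈ Set.Ioc (0 : ℝ) 1)
    (n : ℕ) (A : Matrix (Fin n) (Fin n) ℝ)
    (u : ℝ → Fin n → ℝ) (hu : ContinuousOn u (Set.Icc a b)) :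
    ∀ t ∈ Set.Ioc a b,
      (∑' l : ℕ, (A ^ l).mulVec
        (∫ s in a..t,
          (((ψ s - ψ a) ^ ((l : ℝ) * α + α - 1) / Real.Gamma ((l : ℝ) * α + α)) *
              deriv ψ s) • u (ψinv (ψ t + ψ a - ψ s)))) =
      ∫ s in a..t,
        (deriv ψ s * (ψ t - ψ s) ^ (α - 1)) •
          (mlMatrix α α (((ψ t - ψ s) ^ α) • A)).mulVec (u s) := by
  rintro t ⟨hat, htb⟩
  have hsub : Icc a t ⊆ Icc a b := Icc_subset_Icc_right htb
  have hψc : ContinuousOn ψ (Icc a t) := hψ.continuousOn.mono hsub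
  have hpos : ∀ x ∈ Ioo a t, 0 < deriv ψ x := fun x hx => hψ' x (hsub (Ioo_subset_Icc_self hx))
  -- `deriv ψ x ≠ 0` already forces differentiability, as `deriv` is `0` elsewhere
  have hderiv : ∀ x ∈ Ioo a t, HasDerivAt ψ (deriv ψ x) x := fun x hx =>
    (differentiableAt_of_deriv_ne_zero (hpos x hx).ne').hasDerivAt
  have hreflect : ∀ l : ℕ,
      ∫ s in a..t, ((ψ s - ψ a) ^ ((l : ℝ) * α + α - 1) / Gamma ((l : ℝ) * α + α) *
          deriv ψ s) • u (ψinv (ψ t + ψ a - ψ s)) =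
        ∫ s in a..t, ((ψ t - ψ s) ^ ((l : ℝ) * α + α - 1) / Gamma ((l : ℝ) * α + α) *
          deriv ψ s) • u s := by
    intro l
    have h := integral_deriv_smul_comp_reflect hat.le hψc hderiv (fun x hx => (hpos x hx).le)
      fun y => ((ψ t - y) ^ ((l : ℝ) * α + α - 1) / Gamma ((l : ℝ) * α + α)) • u (ψinv y)
    convert h using 1 <;> refine integral_congr fun s hs => ?_
    · rw [smul_smul, mul_comm (deriv ψ s), show ψ t - (ψ t + ψ a - ψ s) = ψ s - ψ a by ring]
    · rw [uIcc_of_le hat.le] at hs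
      rw [hinv s (hsub hs), smul_smul, mul_comm (deriv ψ s)]
  simp only [hreflect]
  exact tsum_pow_mulVec_integral_eq_integral_mlMatrix_mulVec hat.le hψc hderiv hpos hα.1 A
    (hu.mono hsub)

/-- resummation of the series of generalized ψ-convolutions into a
Mittag–Leffler kernel. -/
theorem conv_series_eq_mittagLeffler_kernel (a b : ℝ) (hab : a < b) (ψ ψinv : ℝ → ℝ)
    (hψ : ContDiffOn ℝ 1 ψ (Set.Icc a b))
    (hψ' : ∀ t ∈ Set.Icc a b, 0 < deriv ψ t)
    (hinv : ∀ x ∈ Set.Icc a b, ψinv (ψ x) = x)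
    (hinv' : ∀ z ∈ Set.Icc (ψ a) (ψ b), ψ (ψinv z) = z)
    (α : ℝ) (hα : α ∈ Set.Ioc (0 : ℝ) 1)
    (n : ℕ) (A : Matrix (Fin n) (Fin n) ℝ)
    (u : ℝ → Fin n → ℝ) (hu : ContinuousOn u (Set.Icc a b)) :
    ∀ t ∈ Set.Ioc a b,
      (∑' l : ℕ, (A ^ l).mulVec
        (∫ s in a..t,
          (((ψ s - ψ a) ^ ((l : ℝ) * α + α - 1) / Real.Gamma ((l : ℝ) * α + α)) *
              deriv ψ s) • u (ψinv (ψ t + ψ a - ψ s)))) =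
      ∫ s in a..t,
        (deriv ψ s * (ψ t - ψ s) ^ (α - 1)) •
          (mlMatrix α α (((ψ t - ψ s) ^ α) • A)).mulVec (u s) :=
  conv_series_eq_mittagLeffler_kernel_general a b ψ ψinv hψ hψ' hinv α hα n A u hu
end
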